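/- Let Γ be a Coxeter graph with canonical root system Φ. Let α = Σ_{s∈S} λ_s α_s ∈ Φ⁺ be a positive root, let t ∈ S be outside the support of α, and let t₀ ∈ Supp(α) be such that d(t, Supp(α)) = d(t, t₀) (distance in the Coxeter graph, where s,t are adjacent iff m_{s,t} ≥ 3) and λ_{t₀} > 1. Then α ≡ α_t, where ≡ is the equivalence relation on Φ generated by α ≡₁ β ⟺ ⟨α,β⟩ ∉ {0,1,-1}. -/

import Mathlib

open Real

/-- A Coxeter matrix on the set `S`, with `0` representing the label `∞`. -/
structure CoxeterMat (S : Type*) where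
  m : S → S → ℕ
  diagonal : ∀ s, m s s = 1
  symmetric : ∀ s t, m s t = m t s
  off_diagonal : ∀ s t, s ≠ t → m s t ≠ 1

namespace CoxeterMat

variable {S : Type*} (M : CoxeterMat S)

/-- The coefficient `⟨α_s, α_t⟩ = -2 cos (π / m_{s,t})`, with value `-2` when `m_{s,t} = ∞`. -/
noncomputable def c (s t : S) : ℝ :=
  if M.m s t = 0 then -2 else -2 * Real.cos (Real.pi / (M.m s t : ℝ))

/-- The simple root `α_s` in `V = ⊕_{s ∈ S} ℝ α_s`. -/
noncomputable def sroot (s : S) : S →₀ ℝ := Finsupp.single s 1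

/-- The canonical bilinear form of the Coxeter graph. -/
noncomputable def bform : (S →₀ ℝ) →ₗ[ℝ] (S →₀ ℝ) →ₗ[ℝ] ℝ :=
  Finsupp.lift _ ℝ S fun s => Finsupp.lift ℝ ℝ S fun t => M.c s t

/-- The simple reflection `σ_s : x ↦ x - ⟨α_s, x⟩ α_s`. -/
noncomputable def sigma (s : S) : (S →₀ ℝ) →ₗ[ℝ] (S →₀ ℝ) :=
  LinearMap.id - (M.bform (sroot s)).smulRight (sroot s)

/-- The Coxeter group `W`, realized as the subgroup of linear automorphisms of `V`
generated by the simple reflections. -/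
noncomputable def Wgrp : Subgroup ((S →₀ ℝ) ≃ₗ[ℝ] (S →₀ ℝ)) :=
  Subgroup.closure {w | ∃ s : S, (w : (S →₀ ℝ) →ₗ[ℝ] (S →₀ ℝ)) = M.sigma s}

/-- The canonical root system `Φ = {w(α_s) | w ∈ W, s ∈ S}`. -/
def Phi : Set (S →₀ ℝ) := {b | ∃ w ∈ M.Wgrp, ∃ s : S, b = w (sroot s)}

/-- The set of positive roots. -/
def PhiPos : Set (S →₀ ℝ) := {b | b ∈ M.Phi ∧ ∀ s, 0 ≤ b s}

/-- The equivalence relation `≡` on `Φ` generated by `α ≡₁ β ⟺ ⟨α, β⟩ ∉ {0, 1, -1}`. -/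
def equivR : (S →₀ ℝ) → (S →₀ ℝ) → Prop :=
  Relation.EqvGen (fun a b => a ∈ M.Phi ∧ b ∈ M.Phi ∧ M.bform a b ∉ ({0, 1, -1} : Set ℝ))

/-- The underlying graph of the Coxeter graph: `s` and `t` are joined iff `m_{s,t} ≥ 3`
(including `m_{s,t} = ∞`). -/
def graph : SimpleGraph S where
  Adj s t := s ≠ t ∧ M.m s t ≠ 2
  symm := ⟨fun s t h => ⟨h.1.symm, by rw [M.symmetric]; exact h.2⟩⟩
  loopless := ⟨fun s h => h.1 rfl⟩

/-- The action of a permutation of `S` on `V`. -/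
noncomputable def permV (g : Equiv.Perm S) : (S →₀ ℝ) ≃ₗ[ℝ] (S →₀ ℝ) :=
  Finsupp.domLCongr g

/-- The set of elements of `W` fixed by the group `G` of symmetries (acting by conjugation
by the corresponding permutations of coordinates). -/
noncomputable def WfixG (G : Subgroup (Equiv.Perm S)) :
    Set ((S →₀ ℝ) ≃ₗ[ℝ] (S →₀ ℝ)) :=
  {w | w ∈ M.Wgrp ∧ ∀ g ∈ G, permV g * w = w * permV g}

/-- Construct a simply laced Coxeter matrix from an adjacency relation. -/
noncomputable def ofAdj (A : S → S → Prop) (hs : ∀ s t, A s t → A t s)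
    (hi : ∀ s, ¬ A s s) : CoxeterMat S where
  m s t := open Classical in if s = t then 1 else if A s t then 3 else 2
  diagonal s := by simp
  symmetric s t := by
    classical
    by_cases h : s = t
    · subst h; rfl
    · have h' : t ≠ s := Ne.symm h
      simp only [if_neg h, if_neg h']
      by_cases hA : A s t
      · rw [if_pos hA, if_pos (hs s t hA)]
      · rw [if_neg hA, if_neg (fun h2 => hA (hs t s h2))]
  off_diagonal s t h := by
    classical
    simp only [if_neg h]
    split <;> norm_num

/-- Isomorphism of Coxeter graphs. -/
def Iso {T : Type*} (M : CoxeterMat S) (N : CoxeterMat T) : Prop :=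
  ∃ e : S ≃ T, ∀ s t, N.m (e s) (e t) = M.m s t

/-- The full Coxeter subgraph spanned by `Y ⊆ S`. -/
def restrict (Y : Set S) : CoxeterMat Y where
  m s t := M.m s t
  diagonal s := M.diagonal s
  symmetric s t := M.symmetric s t
  off_diagonal s t h := M.off_diagonal s t (fun hh => h (Subtype.ext hh))

end CoxeterMat

open CoxeterMat

/-- The Coxeter graph `A_n`: a path with `n` vertices. -/
noncomputable def pathA (n : ℕ) : CoxeterMat (Fin n) :=
  ofAdj (fun i j => i.val + 1 = j.val ∨ j.val + 1 = i.val)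
    (fun _ _ h => h.symm)
    (fun s h => by rcases h with h | h <;> omega)

/-- The Coxeter graph `D_n`: a path `0 — 1 — ⋯ — (n-2)` together with an extra vertex `n-1`
joined to `n-3`. -/
noncomputable def Dmat (n : ℕ) : CoxeterMat (Fin n) :=
  ofAdj (fun i j => i ≠ j ∧
      (((i.val + 1 = j.val ∧ j.val ≤ n - 2) ∨ (i.val + 2 = j.val ∧ j.val = n - 1)) ∨
       ((j.val + 1 = i.val ∧ i.val ≤ n - 2) ∨ (j.val + 2 = i.val ∧ i.val = n - 1))))
    (fun _ _ h => ⟨h.1.symm, h.2.symm⟩)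
    (fun s h => h.1 rfl)

/-- Adjacency relation determined by a list of edges. -/
def listAdj {n : ℕ} (L : List (Fin n × Fin n)) (i j : Fin n) : Prop :=
  (i, j) ∈ L ∨ (j, i) ∈ L

instance {n : ℕ} (L : List (Fin n × Fin n)) (i j : Fin n) : Decidable (listAdj L i j) := by
  unfold listAdj; infer_instance

/-- The Coxeter graph `E₆`. -/
noncomputable def E6mat : CoxeterMat (Fin 6) :=
  ofAdj (listAdj [(0,2),(2,3),(3,4),(4,5),(1,3)])
    (fun _ _ h => h.symm) (by decide)

/-- The Coxeter graph `E₇`. -/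
noncomputable def E7mat : CoxeterMat (Fin 7) :=
  ofAdj (listAdj [(0,2),(2,3),(3,4),(4,5),(5,6),(1,3)])
    (fun _ _ h => h.symm) (by decide)

/-- The Coxeter graph `E₈`. -/
noncomputable def E8mat : CoxeterMat (Fin 8) :=
  ofAdj (listAdj [(0,2),(2,3),(3,4),(4,5),(5,6),(6,7),(1,3)])
    (fun _ _ h => h.symm) (by decide)

/-- The Coxeter graph `A_∞`: the one-sided infinite path. -/
noncomputable def Ainf : CoxeterMat ℕ :=
  ofAdj (fun i j => i + 1 = j ∨ j + 1 = i)
    (fun _ _ h => h.symm)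
    (fun s h => by omega)

/-- The Coxeter graph `_∞A_∞`: the two-sided infinite path. -/
noncomputable def ZAinf : CoxeterMat ℤ :=
  ofAdj (fun i j => i + 1 = j ∨ j + 1 = i)
    (fun _ _ h => h.symm)
    (fun s h => by omega)

/-- The Coxeter graph `D_∞`: vertices `0, 1, 2, 3, …` with `0` and `1` joined to `2` and a
path `2 — 3 — 4 — ⋯`. -/
noncomputable def Dinf : CoxeterMat ℕ :=
  ofAdj (fun i j => i ≠ j ∧
      (((i = 0 ∧ j = 2) ∨ (i = 1 ∧ j = 2) ∨ (i + 1 = j ∧ 2 ≤ i)) ∨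
       ((j = 0 ∧ i = 2) ∨ (j = 1 ∧ i = 2) ∨ (j + 1 = i ∧ 2 ≤ j))))
    (fun _ _ h => ⟨h.1.symm, h.2.symm⟩)
    (fun s h => h.1 rfl)

/-- The affine Coxeter graph `Ã_n`: a cycle with `n + 1` vertices. -/
noncomputable def affA (n : ℕ) : CoxeterMat (ZMod (n + 1)) :=
  ofAdj (fun i j => i ≠ j ∧ (i + 1 = j ∨ j + 1 = i))
    (fun _ _ h => ⟨h.1.symm, h.2.symm⟩)
    (fun s h => h.1 rfl)

/-- The affine Coxeter graph `D̃_n` (on `n + 1` vertices, Bourbaki numbering): `0` and `1`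
joined to `2`, a path `2 — 3 — ⋯ — (n-1)`, and `n` joined to `n-2`. -/
noncomputable def affD (n : ℕ) : CoxeterMat (Fin (n + 1)) :=
  ofAdj (fun i j => i ≠ j ∧
      (((i.val = 0 ∧ j.val = 2) ∨ (i.val = 1 ∧ j.val = 2) ∨
        (i.val + 1 = j.val ∧ 2 ≤ i.val ∧ i.val ≤ n - 2) ∨
        (i.val = n - 2 ∧ j.val = n)) ∨
       ((j.val = 0 ∧ i.val = 2) ∨ (j.val = 1 ∧ i.val = 2) ∨
        (j.val + 1 = i.val ∧ 2 ≤ j.val ∧ j.val ≤ n - 2) ∨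
        (j.val = n - 2 ∧ i.val = n))))
    (fun _ _ h => ⟨h.1.symm, h.2.symm⟩)
    (fun s h => h.1 rfl)

/-- The affine Coxeter graph `Ẽ₆` (Bourbaki numbering, affine vertex `0`). -/
noncomputable def affE6 : CoxeterMat (Fin 7) :=
  ofAdj (listAdj [(1,3),(3,4),(4,5),(5,6),(2,4),(0,2)])
    (fun _ _ h => h.symm) (by decide)

/-- The affine Coxeter graph `Ẽ₇` (Bourbaki numbering, affine vertex `0`). -/
noncomputable def affE7 : CoxeterMat (Fin 8) :=
  ofAdj (listAdj [(0,1),(1,3),(3,4),(4,5),(5,6),(6,7),(2,4)])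
    (fun _ _ h => h.symm) (by decide)

/-- The affine Coxeter graph `Ẽ₈` (Bourbaki numbering, affine vertex `0`). -/
noncomputable def affE8 : CoxeterMat (Fin 9) :=
  ofAdj (listAdj [(1,3),(3,4),(4,5),(5,6),(6,7),(7,8),(2,4),(0,8)])
    (fun _ _ h => h.symm) (by decide)

/-!
Induction on `d(t, t₀)`. Let `t₁` be the neighbour of `t₀` on a geodesic from `t₀` to `t`. By
minimality `t₁ ∉ Supp(α)`, so all terms of `⟨α, α_{t₁}⟩ = Σ λ_s ⟨α_s, α_{t₁}⟩` are `≤ 0` and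
`⟨α, α_{t₁}⟩ ≤ -λ_{t₀} < -1`. Thus `α ≡ α_{t₁} ≡ σ_{t₁}(α)`, and `σ_{t₁}(α)` is a positive root
with support `Supp(α) ∪ {t₁}` and coefficient `-⟨α, α_{t₁}⟩ > 1` at `t₁`, which is one step closer
to `t`.
-/

namespace SimpleGraph

variable {V : Type*} {G : SimpleGraph V} {u v : V}

lemma Reachable.exists_adj_dist_add_one_eq (h : G.Reachable u v) (hne : u ≠ v) :
    ∃ w, G.Adj v w ∧ G.dist u w + 1 = G.dist u v := by
  obtain ⟨p, hp⟩ := h.symm.exists_walk_length_eq_dist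
  cases p with
  | nil => exact absurd rfl hne
  | cons hadj q =>
    refine ⟨_, hadj, le_antisymm ?_ ?_⟩
    · have hq := dist_le q.reverse
      rw [Walk.length_reverse] at hq
      rw [Walk.length_cons, dist_comm] at hp
      omega
    · have := hadj.symm.reachable.dist_triangle_right u
      rwa [dist_eq_one_iff_adj.mpr hadj.symm] at this

end SimpleGraph

namespace CoxeterMat

variable {S : Type*} {M : CoxeterMat S}

lemma c_comm (s t : S) : M.c s t = M.c t s := by
  rw [c, c, M.symmetric]

lemma c_self (s : S) : M.c s s = 2 := by
  simp [c, M.diagonal]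

lemma two_le_m {s t : S} (h : s ≠ t) (h0 : M.m s t ≠ 0) : 2 ≤ M.m s t := by
  have := M.off_diagonal s t h
  omega

lemma c_nonpos {s t : S} (h : s ≠ t) : M.c s t ≤ 0 := by
  rw [c]
  split_ifs with h0
  · norm_num
  · have hm : (2 : ℝ) ≤ M.m s t := by exact_mod_cast two_le_m h h0
    have hle : π / M.m s t ≤ π / 2 := div_le_div_of_nonneg_left pi_pos.le two_pos hm
    have hpos : 0 ≤ π / M.m s t := by positivity
    have : 0 ≤ cos (π / M.m s t) := cos_nonneg_of_mem_Icc ⟨by linarith [pi_pos], hle⟩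
    linarith

lemma c_le_neg_one {s t : S} (h : M.graph.Adj s t) : M.c s t ≤ -1 := by
  rw [c]
  split_ifs with h0
  · norm_num
  · have hm : (3 : ℝ) ≤ M.m s t := by
      have h2 := two_le_m h.1 h0
      have hne2 := h.2
      exact_mod_cast (by omega : 3 ≤ M.m s t)
    have hle : π / M.m s t ≤ π / 3 := div_le_div_of_nonneg_left pi_pos.le three_pos hm
    have : cos (π / 3) ≤ cos (π / M.m s t) :=
      cos_le_cos_of_nonneg_of_le_pi (by positivity) (by linarith [pi_pos]) hle
    rw [cos_pi_div_three] at this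
    linarith

lemma bform_sroot_sroot (s t : S) : M.bform (sroot s) (sroot t) = M.c s t := by
  simp [bform, sroot]

lemma bform_comm (x y : S →₀ ℝ) : M.bform x y = M.bform y x := by
  have : M.bform.flip = M.bform := by
    ext s t
    simp [bform, c_comm]
  exact LinearMap.congr_fun₂ this y x

lemma bform_apply_sroot (x : S →₀ ℝ) (u : S) :
    M.bform x (sroot u) = x.sum fun s xs => xs * M.c s u := by
  simp [bform, sroot, Finsupp.lift_apply]

lemma bform_sroot_lt_neg_one {a : S →₀ ℝ} (hpos : ∀ s, 0 ≤ a s) {u t₀ : S}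
    (hu : u ∉ a.support) (hadj : M.graph.Adj t₀ u) (hl : 1 < a t₀) :
    M.bform a (sroot u) < -1 := by
  classical
  have ht₀ : t₀ ∈ a.support := Finsupp.mem_support_iff.mpr (by linarith)
  rw [bform_apply_sroot, Finsupp.sum, ← Finset.add_sum_erase _ _ ht₀]
  have hrest : ∑ s ∈ a.support.erase t₀, a s * M.c s u ≤ 0 :=
    Finset.sum_nonpos fun s hs => mul_nonpos_of_nonneg_of_nonpos (hpos s)
      (c_nonpos fun h => hu (h ▸ Finset.mem_of_mem_erase hs))
  nlinarith [c_le_neg_one hadj]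

lemma sigma_apply (u : S) (x : S →₀ ℝ) : M.sigma u x = x - M.bform x (sroot u) • sroot u := by
  simp [sigma, bform_comm x]

lemma sigma_apply_of_ne {u r : S} (h : r ≠ u) (x : S →₀ ℝ) : M.sigma u x r = x r := by
  simp [sigma_apply, sroot, h.symm]

lemma sigma_apply_self (u : S) (x : S →₀ ℝ) : M.sigma u x u = x u - M.bform x (sroot u) := by
  simp [sigma_apply, sroot]

lemma mem_support_sigma_of_ne {u r : S} (h : r ≠ u) (x : S →₀ ℝ) :
    r ∈ (M.sigma u x).support ↔ r ∈ x.support := by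
  rw [Finsupp.mem_support_iff, Finsupp.mem_support_iff, sigma_apply_of_ne h]

lemma bform_sigma_sroot (u : S) (x : S →₀ ℝ) :
    M.bform (M.sigma u x) (sroot u) = -M.bform x (sroot u) := by
  rw [sigma_apply, map_sub, map_smul, LinearMap.sub_apply, LinearMap.smul_apply,
    bform_sroot_sroot, c_self, smul_eq_mul]
  ring

lemma sigma_sigma (u : S) (x : S →₀ ℝ) : M.sigma u (M.sigma u x) = x := by
  rw [sigma_apply _ (M.sigma u x), bform_sigma_sroot, sigma_apply, neg_smul, sub_neg_eq_add,
    sub_add_cancel]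

variable (M) in
noncomputable def sigmaEquiv (u : S) : (S →₀ ℝ) ≃ₗ[ℝ] (S →₀ ℝ) :=
  { M.sigma u with
    invFun := M.sigma u
    left_inv := sigma_sigma u
    right_inv := sigma_sigma u }

lemma sigmaEquiv_mem_Wgrp (u : S) : M.sigmaEquiv u ∈ M.Wgrp :=
  Subgroup.subset_closure ⟨u, rfl⟩

lemma sroot_mem_Phi (s : S) : sroot s ∈ M.Phi :=
  ⟨1, one_mem _, s, rfl⟩

lemma sigma_mem_Phi {x : S →₀ ℝ} (u : S) (hx : x ∈ M.Phi) : M.sigma u x ∈ M.Phi := by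
  obtain ⟨w, hw, s, rfl⟩ := hx
  exact ⟨M.sigmaEquiv u * w, mul_mem (sigmaEquiv_mem_Wgrp u) hw, s, rfl⟩

lemma sigma_mem_PhiPos {a : S →₀ ℝ} (ha : a ∈ M.PhiPos) {u : S} (hu : a u = 0)
    (hc : M.bform a (sroot u) ≤ 0) : M.sigma u a ∈ M.PhiPos := by
  refine ⟨sigma_mem_Phi u ha.1, fun r => ?_⟩
  rcases eq_or_ne r u with rfl | hr
  · rw [sigma_apply_self, hu]
    linarith
  · rw [sigma_apply_of_ne hr]
    exact ha.2 r

lemma equivR_of_one_lt_abs {x y : S →₀ ℝ} (hx : x ∈ M.Phi) (hy : y ∈ M.Phi)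
    (h : 1 < |M.bform x y|) : M.equivR x y := by
  refine Relation.EqvGen.rel _ _ ⟨hx, hy, fun hmem => ?_⟩
  obtain h' | h' | h' : M.bform x y = 0 ∨ M.bform x y = 1 ∨ M.bform x y = -1 := hmem <;>
    norm_num [h'] at h

lemma equivR_sigma {x : S →₀ ℝ} (hx : x ∈ M.Phi) {u : S} (h : 1 < |M.bform x (sroot u)|) :
    M.equivR x (M.sigma u x) := by
  refine Relation.EqvGen.trans _ _ _ (equivR_of_one_lt_abs hx (sroot_mem_Phi u) h)
    (equivR_of_one_lt_abs (sroot_mem_Phi u) (sigma_mem_Phi u hx) ?_)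
  rwa [bform_comm, bform_sigma_sroot, abs_neg]

theorem equivR_sroot_of_reachable {a : S →₀ ℝ} (ha : a ∈ M.PhiPos) {t t₀ : S}
    (hreach : M.graph.Reachable t t₀) (ht : t ∉ a.support)
    (hd : ∀ r ∈ a.support, M.graph.dist t t₀ ≤ M.graph.dist t r) (hl : 1 < a t₀) :
    M.equivR a (sroot t) := by
  induction hn : M.graph.dist t t₀ generalizing a t₀ with
  | zero =>
    rw [hreach.dist_eq_zero_iff] at hn
    subst hn
    exact absurd (Finsupp.mem_support_iff.mpr (by linarith)) ht
  | succ n ih =>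
    have hne : t ≠ t₀ := by
      rintro rfl
      simp at hn
    obtain ⟨t₁, hadj, hdist⟩ := hreach.exists_adj_dist_add_one_eq hne
    have ht₁ : t₁ ∉ a.support := fun h => by
      have := hd t₁ h
      omega
    have hc : M.bform a (sroot t₁) < -1 := bform_sroot_lt_neg_one ha.2 ht₁ hadj hl
    have hc_abs : 1 < |M.bform a (sroot t₁)| := by
      rw [abs_of_neg (by linarith)]
      linarith
    rcases eq_or_ne t₁ t with rfl | hne₁
    · exact equivR_of_one_lt_abs ha.1 (sroot_mem_Phi t₁) hc_abs
    have hat₁ : a t₁ = 0 := Finsupp.notMem_support_iff.mp ht₁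
    have hbt₁ : 1 < M.sigma t₁ a t₁ := by
      rw [sigma_apply_self, hat₁]
      linarith
    refine (equivR_sigma ha.1 hc_abs).trans _ _ _ (ih (sigma_mem_PhiPos ha hat₁ (by linarith))
      (hreach.trans hadj.reachable) ?_ ?_ hbt₁ ?_)
    · rwa [mem_support_sigma_of_ne hne₁.symm]
    · intro r hr
      rcases eq_or_ne r t₁ with rfl | hr₁
      · exact le_rfl
      · have := hd r ((mem_support_sigma_of_ne hr₁ a).mp hr)
        omega
    · omega

end CoxeterMat

theorem stmt6_general {S : Type*} (M : CoxeterMat S) (hconn : M.graph.Connected)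
    (a : S →₀ ℝ) (ha : a ∈ M.PhiPos) (t t₀ : S)
    (ht : t ∉ a.support)
    (hd : ∀ r ∈ a.support, M.graph.dist t t₀ ≤ M.graph.dist t r)
    (hl : 1 < a t₀) :
    M.equivR a (sroot t) :=
  equivR_sroot_of_reachable ha (hconn t t₀) ht hd hl

/-- Let `α = Σ λ_s α_s` be a positive root, `t ∉ Supp(α)`, and `t₀ ∈ Supp(α)` realizing
the graph distance from `t` to `Supp(α)`, with `λ_{t₀} > 1`. Then `α ≡ α_t`. -/
theorem stmt6 {S : Type*} (M : CoxeterMat S) (hconn : M.graph.Connected)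
    (a : S →₀ ℝ) (ha : a ∈ M.PhiPos) (t t₀ : S)
    (ht : t ∉ a.support) (ht₀ : t₀ ∈ a.support)
    (hd : ∀ r ∈ a.support, M.graph.dist t t₀ ≤ M.graph.dist t r)
    (hl : 1 < a t₀) :
    M.equivR a (sroot t) :=
  stmt6_general M hconn a ha t t₀ ht hd hl
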